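/- arXiv:2303.06084 — 3 statements merged into one kernel-verified Lean document; each statement's English description precedes it below -/
import Mathlib

section
/- Let a ∈ (−1, 1) and x ∈ ℝ, and define f(a, x) = (a + tanh(x)) / (1 + a·tanh(x)). Then |f(a, x)| < 1, |f(a, x) − a| ≤ 2|tanh(x)|, and the partial derivative ∂ₐ f(a, x) = (1 − tanh²(x)) / (1 + a·tanh(x))² satisfies ∂ₐ f(a, x) ≤ 2 / (1 − |tanh(x)|). -/
/-!
With `t = tanh x ∈ (-1, 1)`, the map is `a ↦ (a + t) / (1 + a t)`, the hyperbolic addition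
`tanh (artanh a + x)`. Every bound comes from the lower bound `1 + a t ≥ 1 - |t|` (and its mirror
`1 + a t ≥ 1 - |a|`) on the denominator, together with the identities
`(1 + a t)² - (a + t)² = (1 - a²)(1 - t²)` and `(a + t) / (1 + a t) - a = t (1 - a²) / (1 + a t)`.
-/

lemma one_sub_abs_le_one_add_mul {a b : ℝ} (ha : |a| ≤ 1) : 1 - |b| ≤ 1 + a * b := by
  have : |a * b| ≤ |b| := by
    rw [abs_mul]
    exact mul_le_of_le_one_left (abs_nonneg b) ha
  linarith [neg_abs_le (a * b)]

lemma one_add_mul_pos {a t : ℝ} (ha : |a| ≤ 1) (ht : |t| < 1) : 0 < 1 + a * t := by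
  linarith [one_sub_abs_le_one_add_mul (b := t) ha]

lemma abs_add_div_one_add_mul_lt_one {a t : ℝ} (ha : |a| < 1) (ht : |t| < 1) :
    |(a + t) / (1 + a * t)| < 1 := by
  have hden := one_add_mul_pos ha.le ht
  have hprod : 0 < (1 - a ^ 2) * (1 - t ^ 2) :=
    mul_pos (sub_pos.mpr ((sq_lt_one_iff_abs_lt_one a).mpr ha))
      (sub_pos.mpr ((sq_lt_one_iff_abs_lt_one t).mpr ht))
  rw [abs_div, abs_of_pos hden, div_lt_one hden]
  exact abs_lt_of_sq_lt_sq (by linear_combination hprod) hden.le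

lemma add_div_one_add_mul_sub_self {a t : ℝ} (hden : 1 + a * t ≠ 0) :
    (a + t) / (1 + a * t) - a = t * (1 - a ^ 2) / (1 + a * t) := by
  field_simp
  ring

lemma abs_add_div_one_add_mul_sub_self_le {a t : ℝ} (ha : |a| < 1) (ht : |t| < 1) :
    |(a + t) / (1 + a * t) - a| ≤ 2 * |t| := by
  have hden := one_add_mul_pos ha.le ht
  have hnum : 1 - a ^ 2 ≤ 2 * (1 + a * t) := by
    have hmirror := one_sub_abs_le_one_add_mul (b := a) ht.le
    rw [mul_comm t a] at hmirror
    nlinarith [sq_abs a, abs_nonneg a]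
  rw [add_div_one_add_mul_sub_self hden.ne', abs_div, abs_mul, abs_of_pos hden,
    abs_of_nonneg (sub_nonneg.mpr ((sq_le_one_iff_abs_le_one a).mpr ha.le)),
    mul_div_assoc, mul_comm 2]
  exact mul_le_mul_of_nonneg_left ((div_le_iff₀ hden).mpr hnum) (abs_nonneg t)

lemma hasDerivAt_add_div_one_add_mul {a t : ℝ} (hden : 1 + a * t ≠ 0) :
    HasDerivAt (fun s : ℝ => (s + t) / (1 + s * t)) ((1 - t ^ 2) / (1 + a * t) ^ 2) a := by
  have hnum : HasDerivAt (fun s : ℝ => s + t) 1 a := (hasDerivAt_id a).add_const t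
  have hden' : HasDerivAt (fun s : ℝ => 1 + s * t) t a := by
    simpa using ((hasDerivAt_id a).mul_const t).const_add 1
  exact (hnum.div hden' hden).congr_deriv (by ring)

lemma one_sub_sq_div_one_add_mul_sq_le {a t : ℝ} (ha : |a| ≤ 1) (ht : |t| < 1) :
    (1 - t ^ 2) / (1 + a * t) ^ 2 ≤ 2 / (1 - |t|) := by
  have hpos : 0 < 1 - |t| := by linarith
  have hden : 1 - |t| ≤ 1 + a * t := one_sub_abs_le_one_add_mul ha
  calc (1 - t ^ 2) / (1 + a * t) ^ 2
      ≤ (1 - |t|) * (1 + |t|) / (1 - |t|) ^ 2 := by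
        rw [← sq_abs t, show (1 - |t| ^ 2) = (1 - |t|) * (1 + |t|) by ring]
        gcongr
    _ = (1 + |t|) / (1 - |t|) := by field_simp
    _ ≤ 2 / (1 - |t|) := by gcongr; linarith

theorem cavity_update_bounds (a x : ℝ) (ha : a ∈ Set.Ioo (-1 : ℝ) 1) :
    |(a + Real.tanh x) / (1 + a * Real.tanh x)| < 1 ∧
    |(a + Real.tanh x) / (1 + a * Real.tanh x) - a| ≤ 2 * |Real.tanh x| ∧
    HasDerivAt (fun t : ℝ => (t + Real.tanh x) / (1 + t * Real.tanh x))
      ((1 - Real.tanh x ^ 2) / (1 + a * Real.tanh x) ^ 2) a ∧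
    (1 - Real.tanh x ^ 2) / (1 + a * Real.tanh x) ^ 2 ≤ 2 / (1 - |Real.tanh x|) := by
  have ha' : |a| < 1 := abs_lt.mpr ha
  have ht := Real.abs_tanh_lt_one x
  exact ⟨abs_add_div_one_add_mul_lt_one ha' ht, abs_add_div_one_add_mul_sub_self_le ha' ht,
    hasDerivAt_add_div_one_add_mul (one_add_mul_pos ha'.le ht).ne',
    one_sub_sq_div_one_add_mul_sq_le ha'.le ht⟩
end

section
/- Let η₁, …, η_N be independent Rademacher random variables (each ±1 with probability 1/2) and a₁, …, a_N real numbers with ∑ᵢ aᵢ² < 1. Then E[exp((1/2)(∑ᵢ aᵢηᵢ)²)] ≤ (1 − ∑ᵢ aᵢ²)^(−1/2). -/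
/-!
Hubbard–Stratonovich: `exp (s ^ 2 / 2) = 𝔼[exp (s Z)]` for a standard Gaussian `Z`. Taking
expectations and exchanging the two integrals (Tonelli) turns `𝔼[exp (S ^ 2 / 2)]` into
`𝔼_Z[mgf S Z]`. A weighted Rademacher sum `S = ∑ aᵢ ηᵢ` is sub-Gaussian with parameter
`t = ∑ aᵢ ^ 2` (`cosh x ≤ exp (x ^ 2 / 2)` and independence), so this is at most
`𝔼[exp (t Z ^ 2 / 2)] = (1 - t) ^ (-1/2)`.
-/

open MeasureTheory ProbabilityTheory Real
open scoped ENNReal NNReal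

lemma lintegral_exp_mul_sq_div_two_gaussianReal {c : ℝ} (hc : c < 1) :
    ∫⁻ y, ENNReal.ofReal (exp (c * y ^ 2 / 2)) ∂gaussianReal 0 1
      = ENNReal.ofReal ((1 - c) ^ (-(1 : ℝ) / 2)) := by
  have hc' : 0 < (1 - c) / 2 := by linarith
  have h_density (y : ℝ) : gaussianPDF 0 1 y * ENNReal.ofReal (exp (c * y ^ 2 / 2))
      = ENNReal.ofReal ((√(2 * π))⁻¹ * exp (-((1 - c) / 2) * y ^ 2)) := by
    rw [gaussianPDF_def, gaussianPDFReal_def, ← ENNReal.ofReal_mul (by positivity), mul_assoc,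
      ← exp_add]
    congr 3
    · simp
    · push_cast; ring
  rw [gaussianReal_of_var_ne_zero 0 one_ne_zero,
    lintegral_withDensity_eq_lintegral_mul _ (measurable_gaussianPDF 0 1) (by fun_prop)]
  simp only [Pi.mul_apply, h_density]
  rw [← ofReal_integral_eq_lintegral_ofReal ((integrable_exp_neg_mul_sq hc').const_mul _)
    (ae_of_all _ fun _ => by positivity), integral_const_mul, integral_gaussian]
  congr 1
  rw [show π / ((1 - c) / 2) = 2 * π / (1 - c) by field_simp, sqrt_div (by positivity),
    mul_div_assoc', inv_mul_cancel₀ (by positivity), one_div, sqrt_eq_rpow,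
    ← rpow_neg (by linarith)]
  norm_num

lemma ofReal_exp_sq_div_two_eq_lintegral_gaussianReal (s : ℝ) :
    ENNReal.ofReal (exp (s ^ 2 / 2)) = ∫⁻ y, ENNReal.ofReal (exp (s * y)) ∂gaussianReal 0 1 := by
  rw [← ofReal_integral_eq_lintegral_ofReal (integrable_exp_mul_gaussianReal s)
    (ae_of_all _ fun _ => (exp_pos _).le)]
  have h_mgf := congrFun (mgf_id_gaussianReal (μ := 0) (v := 1)) s
  simp only [mgf, id] at h_mgf
  simp [h_mgf]

theorem ProbabilityTheory.HasSubgaussianMGF.integral_exp_sq_div_two_le {Ω : Type*}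
    [MeasurableSpace Ω] {μ : Measure Ω} [SFinite μ] {X : Ω → ℝ} {c : ℝ≥0}
    (hX : HasSubgaussianMGF X c μ) (hc : (c : ℝ) < 1) :
    ∫ ω, exp (X ω ^ 2 / 2) ∂μ ≤ (1 - c) ^ (-(1 : ℝ) / 2) := by
  have hX_meas := hX.aemeasurable
  have h_mgf (y : ℝ) :
      ∫⁻ ω, ENNReal.ofReal (exp (X ω * y)) ∂μ ≤ ENNReal.ofReal (exp (c * y ^ 2 / 2)) := by
    simp_rw [mul_comm (X _) y]
    rw [← ofReal_integral_eq_lintegral_ofReal (hX.integrable_exp_mul y)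
      (ae_of_all _ fun _ => (exp_pos _).le)]
    exact ENNReal.ofReal_le_ofReal (hX.mgf_le y)
  have h_meas : AEMeasurable (Function.uncurry fun ω (y : ℝ) ↦ ENNReal.ofReal (exp (X ω * y)))
      (μ.prod (gaussianReal 0 1)) := by
    have := hX_meas.comp_fst (ν := gaussianReal 0 1)
    fun_prop
  have h_lintegral : ∫⁻ ω, ENNReal.ofReal (exp (X ω ^ 2 / 2)) ∂μ
      ≤ ENNReal.ofReal ((1 - c) ^ (-(1 : ℝ) / 2)) :=
    calc ∫⁻ ω, ENNReal.ofReal (exp (X ω ^ 2 / 2)) ∂μ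
        = ∫⁻ ω, ∫⁻ y, ENNReal.ofReal (exp (X ω * y)) ∂gaussianReal 0 1 ∂μ := by
          simp_rw [ofReal_exp_sq_div_two_eq_lintegral_gaussianReal]
      _ = ∫⁻ y, ∫⁻ ω, ENNReal.ofReal (exp (X ω * y)) ∂μ ∂gaussianReal 0 1 :=
          lintegral_lintegral_swap h_meas
      _ ≤ ∫⁻ y, ENNReal.ofReal (exp (c * y ^ 2 / 2)) ∂gaussianReal 0 1 := lintegral_mono h_mgf
      _ = ENNReal.ofReal ((1 - c) ^ (-(1 : ℝ) / 2)) := lintegral_exp_mul_sq_div_two_gaussianReal hc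
  rw [integral_eq_lintegral_of_nonneg_ae (ae_of_all _ fun _ => (exp_pos _).le)
    (by fun_prop : AEMeasurable _ μ).aestronglyMeasurable]
  exact ENNReal.toReal_le_of_le_ofReal (by positivity) h_lintegral

noncomputable def rademacherMeasure : Measure ℝ :=
  (1 / 2 : ℝ≥0∞) • Measure.dirac 1 + (1 / 2 : ℝ≥0∞) • Measure.dirac (-1)

lemma integrable_rademacherMeasure (f : ℝ → ℝ) : Integrable f rademacherMeasure :=
  ((integrable_dirac enorm_lt_top).smul_measure (by simp)).add_measure
    ((integrable_dirac enorm_lt_top).smul_measure (by simp))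

lemma integral_rademacherMeasure (f : ℝ → ℝ) :
    ∫ x, f x ∂rademacherMeasure = (f 1 + f (-1)) / 2 := by
  rw [rademacherMeasure, integral_add_measure, integral_smul_measure, integral_smul_measure,
    integral_dirac, integral_dirac]
  · simp only [one_div, ENNReal.toReal_inv, ENNReal.toReal_ofNat, smul_eq_mul]
    ring
  all_goals exact (integrable_dirac enorm_lt_top).smul_measure (by simp)

lemma hasSubgaussianMGF_id_rademacherMeasure : HasSubgaussianMGF id 1 rademacherMeasure where
  integrable_exp_mul _ := integrable_rademacherMeasure _
  mgf_le t := by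
    rw [mgf, integral_rademacherMeasure]
    simpa [← cosh_eq] using cosh_le_exp_half_sq t

lemma hasSubgaussianMGF_sum_mul_of_iIndepFun {Ω ι : Type*} [MeasurableSpace Ω] {μ : Measure Ω}
    {η : ι → Ω → ℝ} (hmeas : ∀ i, Measurable (η i)) (hindep : iIndepFun η μ)
    (hlaw : ∀ i, μ.map (η i) = rademacherMeasure) (a : ι → ℝ) (s : Finset ι) :
    HasSubgaussianMGF (fun ω ↦ ∑ i ∈ s, a i * η i ω) (∑ i ∈ s, ‖a i‖₊ ^ 2) μ := by
  have h_indep : iIndepFun (fun i ω ↦ a i * η i ω) μ :=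
    hindep.comp (fun i x ↦ a i * x) fun i ↦ by fun_prop
  refine HasSubgaussianMGF.sum_of_iIndepFun h_indep fun i _ ↦ ?_
  have h_unit : HasSubgaussianMGF (η i) 1 μ := by
    rw [← HasSubgaussianMGF.id_map_iff (hmeas i).aemeasurable, hlaw i]
    exact hasSubgaussianMGF_id_rademacherMeasure
  convert h_unit.const_mul (a i) using 1
  ext
  simp only [NNReal.coe_pow, coe_nnnorm, norm_eq_abs, sq_abs]
  exact (mul_one _).symm

theorem rademacher_exp_moment {Ω : Type*} [MeasurableSpace Ω] (μ : Measure Ω)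
    [IsProbabilityMeasure μ] (N : ℕ) (η : Fin N → Ω → ℝ) (a : Fin N → ℝ)
    (hmeas : ∀ i, Measurable (η i))
    (hindep : iIndepFun η μ)
    (hlaw : ∀ i, μ.map (η i)
      = (1 / 2 : ℝ≥0∞) • Measure.dirac (1 : ℝ) + (1 / 2 : ℝ≥0∞) • Measure.dirac (-1 : ℝ))
    (ha : ∑ i, a i ^ 2 < 1) :
    ∫ ω, Real.exp ((1 / 2) * (∑ i, a i * η i ω) ^ 2) ∂μ
      ≤ (1 - ∑ i, a i ^ 2) ^ (-(1 : ℝ) / 2) := by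
  have h_param : ((∑ i, ‖a i‖₊ ^ 2 : ℝ≥0) : ℝ) = ∑ i, a i ^ 2 := by simp
  have hS := hasSubgaussianMGF_sum_mul_of_iIndepFun hmeas hindep hlaw a Finset.univ
  have h_bound := hS.integral_exp_sq_div_two_le (h_param ▸ ha)
  rw [h_param] at h_bound
  simpa only [one_div_mul_eq_div] using h_bound
end

section
/- Let f : ℕ → ℝ satisfy |f(1) − f(0)| ≤ d and |f(2) − f(0)| ≤ d for some d ≥ 0. Let X ∼ Poisson(Δ) and Y ∼ Bernoulli(Δ) for some Δ ∈ (0, 1]. Then |E f(X) − E f(Y)| ≤ (3/2)(Δ³|f(0)| + dΔ² + Δ³·E|f(X + 3)|), provided E|f(X+3)| < ∞. -/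
set_option maxHeartbeats 1000000

/-- Poisson–Bernoulli comparison: expectations are written out explicitly,
`∑' k, e^{-Δ} Δ^k / k! * f k` is `E f(X)` for `X ∼ Poisson(Δ)` and
`(1-Δ) f 0 + Δ f 1` is `E f(Y)` for `Y ∼ Bernoulli(Δ)`. -/
theorem poisson_bernoulli_comparison (f : ℕ → ℝ) (d Δ : ℝ)
    (hd : 0 ≤ d) (hΔ : 0 < Δ) (hΔ1 : Δ ≤ 1)
    (h1 : |f 1 - f 0| ≤ d) (h2 : |f 2 - f 0| ≤ d)
    (hint : Summable (fun k : ℕ => Real.exp (-Δ) * Δ ^ k / (Nat.factorial k) * f k))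
    (hint3 : Summable (fun k : ℕ => Real.exp (-Δ) * Δ ^ k / (Nat.factorial k) * |f (k + 3)|)) :
    |(∑' k : ℕ, Real.exp (-Δ) * Δ ^ k / (Nat.factorial k) * f k)
        - ((1 - Δ) * f 0 + Δ * f 1)|
      ≤ (3 / 2) * (Δ ^ 3 * |f 0| + d * Δ ^ 2
          + Δ ^ 3 * ∑' k : ℕ, Real.exp (-Δ) * Δ ^ k / (Nat.factorial k) * |f (k + 3)|) := by
  set p : ℕ → ℝ := fun k => Real.exp (-Δ) * Δ ^ k / (Nat.factorial k) with hp
  have hppos : ∀ k, 0 ≤ p k := fun k => by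
    have := Real.exp_pos (-Δ); positivity
  have hpsummable : Summable p := by
    have := (Real.summable_pow_div_factorial Δ).mul_left (Real.exp (-Δ))
    simpa [hp, mul_div_assoc] using this
  have hptot : ∑' k, p k = 1 := by
    have hA : ∑' k, p k = Real.exp (-Δ) * ∑' k : ℕ, Δ ^ k / (Nat.factorial k) := by
      simp_rw [hp, mul_div_assoc]; exact tsum_mul_left
    have hB : ∑' k : ℕ, Δ ^ k / (Nat.factorial k) = Real.exp Δ := by
      rw [Real.exp_eq_exp_ℝ, NormedSpace.exp_eq_tsum_div]
    rw [hA, hB, ← Real.exp_add]; simp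
  -- termwise bound : p (k+3) ≤ Δ^3/6 * p k
  have hterm : ∀ k, p (k + 3) ≤ Δ ^ 3 / 6 * p k := by
    intro k
    have hfac : (6 : ℝ) * (Nat.factorial k) ≤ (Nat.factorial (k + 3)) := by
      have h6 : 6 * k.factorial ≤ (k + 3).factorial := by
        have hfe : (k + 3).factorial = ((k + 3) * ((k + 2) * (k + 1))) * k.factorial := by
          show ((k+2)+1).factorial = _
          rw [Nat.factorial_succ, Nat.factorial_succ, Nat.factorial_succ]; ring
        rw [hfe]
        refine Nat.mul_le_mul_right _ ?_
        calc (6:ℕ) = 3 * (2 * 1) := rfl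
          _ ≤ (k + 3) * ((k + 2) * (k + 1)) :=
            Nat.mul_le_mul (by omega) (Nat.mul_le_mul (by omega) (by omega))
      exact_mod_cast h6
    have he : (0:ℝ) < Real.exp (-Δ) := Real.exp_pos _
    have hnum : (0:ℝ) ≤ Real.exp (-Δ) * Δ ^ (k + 3) := by positivity
    have hd1 : (0:ℝ) < 6 * (Nat.factorial k) := by positivity
    have := div_le_div_of_nonneg_left hnum hd1 hfac
    calc p (k + 3) = Real.exp (-Δ) * Δ ^ (k + 3) / (Nat.factorial (k + 3)) := rfl
      _ ≤ Real.exp (-Δ) * Δ ^ (k + 3) / (6 * (Nat.factorial k)) := this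
      _ = Δ ^ 3 / 6 * p k := by rw [hp]; field_simp; ring
  -- summable tails
  have hps3 : Summable fun k => p (k + 3) := (summable_nat_add_iff 3).mpr hpsummable
  have hfs3 : Summable fun k => p (k + 3) * f (k + 3) := (summable_nat_add_iff 3).mpr hint
  have habs3 : Summable fun k => p (k + 3) * |f (k + 3)| := by
    apply Summable.of_nonneg_of_le (fun k => by positivity)
      (fun k => mul_le_mul_of_nonneg_right (hterm k) (abs_nonneg _))
    simpa [mul_assoc] using hint3.mul_left (Δ ^ 3 / 6)
  set S : ℝ := ∑' k : ℕ, p k * |f (k + 3)| with hS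
  have hS0 : 0 ≤ S := tsum_nonneg fun k => mul_nonneg (hppos k) (abs_nonneg _)
  set T : ℝ := ∑' k : ℕ, p (k + 3) * f (k + 3) with hT
  -- split the main sum
  have hsplit : ∑' k, p k * f k = p 0 * f 0 + p 1 * f 1 + p 2 * f 2 + T := by
    have := Summable.sum_add_tsum_nat_add (f := fun k => p k * f k) 3 hint
    rw [← this, Finset.sum_range_succ, Finset.sum_range_succ, Finset.sum_range_one]
  -- tail mass
  set R : ℝ := ∑' k : ℕ, p (k + 3) with hR
  have hRsplit : p 0 + p 1 + p 2 + R = 1 := by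
    have := Summable.sum_add_tsum_nat_add (f := p) 3 hpsummable
    rw [Finset.sum_range_succ, Finset.sum_range_succ, Finset.sum_range_one] at this
    linarith [this.trans hptot]
  have hR0 : 0 ≤ R := tsum_nonneg fun k => hppos _
  have hRle : R ≤ Δ ^ 3 / 6 := by
    have : R ≤ ∑' k, Δ ^ 3 / 6 * p k :=
      Summable.tsum_le_tsum hterm hps3 (hpsummable.mul_left _)
    rwa [tsum_mul_left, hptot, mul_one] at this
  -- bound on |T|
  have hTle : |T| ≤ Δ ^ 3 / 6 * S := by
    have habs_eq : (fun k : ℕ => |p (k + 3) * f (k + 3)|) = fun k => p (k + 3) * |f (k + 3)| :=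
      funext fun k => by rw [abs_mul, abs_of_nonneg (hppos _)]
    have hsum_abs : Summable fun k : ℕ => |p (k + 3) * f (k + 3)| := by
      rw [habs_eq]; exact habs3
    have h1' : |T| ≤ ∑' k : ℕ, |p (k + 3) * f (k + 3)| := by
      simpa only [Real.norm_eq_abs] using
        norm_tsum_le_tsum_norm (f := fun k : ℕ => p (k + 3) * f (k + 3))
          (by simpa only [Real.norm_eq_abs] using hsum_abs)
    have h2' : ∑' k : ℕ, |p (k + 3) * f (k + 3)| ≤ ∑' k : ℕ, Δ ^ 3 / 6 * (p k * |f (k + 3)|) := by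
      refine Summable.tsum_le_tsum (fun k => ?_) hsum_abs ?_
      · rw [abs_mul, abs_of_nonneg (hppos _), ← mul_assoc]
        exact mul_le_mul_of_nonneg_right (hterm k) (abs_nonneg _)
      · simpa [mul_assoc] using hint3.mul_left (Δ ^ 3 / 6)
    have h3' : ∑' k : ℕ, Δ ^ 3 / 6 * (p k * |f (k + 3)|) = Δ ^ 3 / 6 * S := tsum_mul_left
    linarith
  -- p values
  have he1 : Real.exp (-Δ) ≤ 1 := Real.exp_le_one_iff.mpr (by linarith)
  have he2 : 1 - Δ ≤ Real.exp (-Δ) := by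
    have := Real.add_one_le_exp (-Δ); linarith
  have hp1 : |p 1 - Δ| ≤ Δ ^ 2 := by
    have hp1v : p 1 = Real.exp (-Δ) * Δ := by simp [hp]
    rw [hp1v, abs_le]
    constructor <;> nlinarith
  have hp2 : p 2 ≤ Δ ^ 2 / 2 := by
    have : p 2 = Real.exp (-Δ) * Δ ^ 2 / 2 := by norm_num [hp, Nat.factorial]
    rw [this]; nlinarith [sq_nonneg Δ]
  -- final assembly
  rw [hsplit]
  have key : p 0 * f 0 + p 1 * f 1 + p 2 * f 2 + T - ((1 - Δ) * f 0 + Δ * f 1)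
      = -(R * f 0) + (p 1 - Δ) * (f 1 - f 0) + p 2 * (f 2 - f 0) + T := by
    linear_combination (f 0) * hRsplit
  rw [key]
  have b1 : |-(R * f 0)| ≤ Δ ^ 3 / 6 * |f 0| := by
    rw [abs_neg, abs_mul, abs_of_nonneg hR0]
    exact mul_le_mul_of_nonneg_right hRle (abs_nonneg _)
  have b2 : |(p 1 - Δ) * (f 1 - f 0)| ≤ Δ ^ 2 * d := by
    rw [abs_mul]
    exact mul_le_mul hp1 h1 (abs_nonneg _) (sq_nonneg Δ)
  have b3 : |p 2 * (f 2 - f 0)| ≤ Δ ^ 2 / 2 * d := by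
    rw [abs_mul, abs_of_nonneg (hppos 2)]
    exact mul_le_mul hp2 h2 (abs_nonneg _) (by positivity)
  have htri : |-(R * f 0) + (p 1 - Δ) * (f 1 - f 0) + p 2 * (f 2 - f 0) + T|
      ≤ |-(R * f 0)| + |(p 1 - Δ) * (f 1 - f 0)| + |p 2 * (f 2 - f 0)| + |T| := by
    calc _ ≤ |-(R * f 0) + (p 1 - Δ) * (f 1 - f 0) + p 2 * (f 2 - f 0)| + |T| := abs_add_le _ _
      _ ≤ |-(R * f 0) + (p 1 - Δ) * (f 1 - f 0)| + |p 2 * (f 2 - f 0)| + |T| := by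
          linarith [abs_add_le (-(R * f 0) + (p 1 - Δ) * (f 1 - f 0)) (p 2 * (f 2 - f 0))]
      _ ≤ _ := by linarith [abs_add_le (-(R * f 0)) ((p 1 - Δ) * (f 1 - f 0))]
  have c1 : 0 ≤ Δ ^ 3 * |f 0| := by positivity
  have c2 : 0 ≤ Δ ^ 3 * S := mul_nonneg (by positivity) hS0
  have c3 : 0 ≤ d * Δ ^ 2 := by positivity
  nlinarith [htri, b1, b2, b3, hTle, c1, c2, c3]
end
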